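/- For every m ≥ 0 and the Lucas numbers L_k (L_0 = 2, L_1 = 1, L_{k+2} = L_{k+1} + L_k), the polynomial x^2 + x - 1 divides x^(2m+2) + (-1)^m · L_{m+1} · x^(m+1) + (-1)^(m+1) in ℤ[x]. -/

import Mathlib

open Polynomial

def Luc : ℕ → ℤ
  | 0 => 2
  | 1 => 1
  | (n+2) => Luc (n+1) + Luc n

/-!
Write `L_n = φⁿ + ψⁿ` with `φ + ψ = 1`, `φψ = -1`. Then
`y^(2n) - L_n yⁿ + (-1)ⁿ = (yⁿ - φⁿ)(yⁿ - ψⁿ)` vanishes at `y = φ`, and the substitution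
`y = -x` turns `y² - y - 1` into `x² + x - 1` and this polynomial into the one of the theorem.
Working in `ℤ[X] ⧸ (X² + X - 1)` with `φ = -x`, `ψ = x + 1` keeps everything over `ℤ`.
-/

section LucasRoots

variable {R : Type*} [CommRing R] {r s : R}

theorem Luc_eq_pow_add_pow (hsum : r + s = 1) (hprod : r * s = -1) :
    ∀ n : ℕ, (Luc n : R) = r ^ n + s ^ n
  | 0 => by norm_num [Luc]
  | 1 => by simp [Luc, hsum]
  | n + 2 => by
    rw [Luc, Int.cast_add, Luc_eq_pow_add_pow hsum hprod n,
      Luc_eq_pow_add_pow hsum hprod (n + 1)]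
    linear_combination (r ^ n + s ^ n) * hprod - (r ^ (n + 1) + s ^ (n + 1)) * hsum

theorem pow_two_mul_sub_Luc_mul_pow_add_neg_one_pow (hsum : r + s = 1) (hprod : r * s = -1)
    (n : ℕ) : r ^ (2 * n) - Luc n * r ^ n + (-1) ^ n = 0 := by
  rw [Luc_eq_pow_add_pow hsum hprod, ← hprod, mul_pow]
  ring

end LucasRoots

theorem stmt_10 (m : ℕ) :
    (X^2 + X - 1 : ℤ[X])
      ∣ X^(2*m+2) + C ((-1)^m * Luc (m+1)) * X^(m+1) + C ((-1)^(m+1)) := by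
  rw [← AdjoinRoot.mk_eq_zero]
  set x := AdjoinRoot.root (X^2 + X - 1 : ℤ[X])
  have hx : x ^ 2 + x - 1 = 0 := by
    have h := AdjoinRoot.mk_self (f := (X^2 + X - 1 : ℤ[X]))
    rwa [map_sub, map_add, map_pow, map_one, AdjoinRoot.mk_X] at h
  have hvanish := pow_two_mul_sub_Luc_mul_pow_add_neg_one_pow (r := -x) (s := x + 1) (by ring)
    (by linear_combination -hx) (m + 1)
  rw [(even_two_mul _).neg_pow, neg_pow] at hvanish
  simp only [map_add, map_mul, map_pow, AdjoinRoot.mk_X, AdjoinRoot.mk_C,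
    eq_intCast (AdjoinRoot.of _)]
  push_cast
  linear_combination hvanish
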